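/- Set z₀ = ε' + ε τ and suppose θ₃(z₀) ≠ 0. Then the function z ↦ Θ_{ε,ε'}(z) is complex-differentiable at 0 and its derivative satisfies Θ_{ε,ε'}'(0) = (2π i ε + θ₃'(z₀)/θ₃(z₀)) · Θ_{ε,ε'}(0), where θ₃' is the derivative of θ₃ in z. (Equivalently, the logarithmic derivative Θ'/Θ(0), which equals π r_χ for the Robin-type constant r_χ of the chiral Cauchy kernel on the torus, is 2π i ε + (θ₃'/θ₃)(ε' + ε τ).) -/

import Mathlib

open Filter Topology

/-- Theta function with characteristics:
`Θ_{ε,ε'}(z) = Σ_{n∈ℤ} exp(2πi(½τ(n+ε)² + (n+ε)(z+ε')))`. -/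
noncomputable def Theta (τ : ℂ) (ε ε' : ℝ) (z : ℂ) : ℂ :=
  ∑' n : ℤ, Complex.exp (2 * (Real.pi : ℂ) * Complex.I *
    ((1 / 2) * τ * ((n : ℂ) + (ε : ℂ)) ^ 2 + ((n : ℂ) + (ε : ℂ)) * (z + (ε' : ℂ))))

/-!
Completing the square in each term shows that `Θ_{ε,ε'}` is the standard theta function shifted
by `z₀ = ε' + ετ`, times an exponential factor linear in `z`:
`Θ_{ε,ε'}(z) = exp(2πi(½τε² + ε(z + ε'))) · θ₃(z + z₀)`.
The logarithmic derivative at `0` is therefore that of the exponential, `2πiε`, plus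
`θ₃'(z₀)/θ₃(z₀)`.
-/

open Complex
open scoped Real

theorem Theta_eq_exp_mul_jacobiTheta₂ (τ : ℂ) (ε ε' : ℝ) (z : ℂ) :
    Theta τ ε ε' z =
      exp (2 * π * I * ((1 / 2) * τ * ε ^ 2 + ε * (z + ε'))) * jacobiTheta₂ (z + (ε' + ε * τ)) τ := by
  rw [Theta, jacobiTheta₂, ← tsum_mul_left]
  congr 1 with n
  rw [jacobiTheta₂_term, ← exp_add]
  congr 1
  ring

theorem hasDerivAt_Theta {τ : ℂ} (hτ : 0 < τ.im) (ε ε' : ℝ) (z : ℂ) :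
    HasDerivAt (Theta τ ε ε')
      (2 * π * I * ε * Theta τ ε ε' z +
        exp (2 * π * I * ((1 / 2) * τ * ε ^ 2 + ε * (z + ε'))) *
          jacobiTheta₂' (z + (ε' + ε * τ)) τ) z := by
  have hexp : HasDerivAt (fun w : ℂ => exp (2 * π * I * ((1 / 2) * τ * ε ^ 2 + ε * (w + ε'))))
      (exp (2 * π * I * ((1 / 2) * τ * ε ^ 2 + ε * (z + ε'))) * (2 * π * I * ε)) z := by
    refine HasDerivAt.cexp ?_
    simpa using ((((hasDerivAt_id z).add_const (ε' : ℂ)).const_mul (ε : ℂ)).const_add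
      ((1 / 2) * τ * (ε : ℂ) ^ 2)).const_mul (2 * π * I)
  have htheta : HasDerivAt (fun w : ℂ => jacobiTheta₂ (w + (ε' + ε * τ)) τ)
      (jacobiTheta₂' (z + (ε' + ε * τ)) τ) z := by
    simpa using (hasDerivAt_jacobiTheta₂_fst (z + (ε' + ε * τ)) hτ).comp_add_const z (ε' + ε * τ)
  rw [Theta_eq_exp_mul_jacobiTheta₂ τ ε ε' z, funext (Theta_eq_exp_mul_jacobiTheta₂ τ ε ε')]
  exact (hexp.mul htheta).congr_deriv (by ring)

/-- With `z₀ = ε' + ετ` and `θ₃(z₀) ≠ 0`, the function `z ↦ Θ_{ε,ε'}(z)` is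
complex-differentiable at `0` with derivative
`Θ_{ε,ε'}'(0) = (2πiε + θ₃'(z₀)/θ₃(z₀))·Θ_{ε,ε'}(0)`. -/
theorem stmt6 (τ : ℂ) (hτ : 0 < τ.im) (ε ε' : ℝ)
    (h : jacobiTheta₂ ((ε' : ℂ) + (ε : ℂ) * τ) τ ≠ 0) :
    HasDerivAt (Theta τ ε ε')
      ((2 * (Real.pi : ℂ) * Complex.I * (ε : ℂ) +
          deriv (fun z : ℂ => jacobiTheta₂ z τ) ((ε' : ℂ) + (ε : ℂ) * τ) /
            jacobiTheta₂ ((ε' : ℂ) + (ε : ℂ) * τ) τ) *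
        Theta τ ε ε' 0) 0 := by
  convert hasDerivAt_Theta hτ ε ε' 0 using 1
  rw [(hasDerivAt_jacobiTheta₂_fst _ hτ).deriv, Theta_eq_exp_mul_jacobiTheta₂]
  simp only [zero_add]
  field_simp
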